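/- Let N > 3 be a natural number, k ∈ {1, ..., N−2}, and t > 0. Then I_t(k,N) := Σ_{j=k+1}^{N−1} exp(−t(1 − cos(πj/N))) satisfies I_t(k,N) ≤ (1/2)·(N²/(k t))·exp(−2t k²/N²). -/

import Mathlib

/-! Jordan's inequality `1 - cos θ ≥ 2θ²/π²` on `[-π, π]` bounds each term by the Gaussian
`exp (-a j²)` with `a = 2t/N²`. Replacing the Gaussian by its tangent exponential at `j = k`
turns the tail into a geometric series of ratio `e^{-x}`, `x = 2ak`, whose sum is at most
`e^{-a k²} / (e^x - 1) ≤ e^{-a k²} / x`. -/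

open Finset Real

lemma exp_neg_div_one_sub_exp_neg_le_inv {x : ℝ} (hx : 0 < x) :
    exp (-x) / (1 - exp (-x)) ≤ x⁻¹ := by
  have hex : x < exp x - 1 := by linarith [add_one_lt_exp hx.ne']
  calc exp (-x) / (1 - exp (-x)) = (exp x - 1)⁻¹ := by
        rw [exp_neg]; field_simp [(exp_pos x).ne']
    _ ≤ x⁻¹ := inv_anti₀ hx hex.le

lemma exp_neg_mul_sq_le_exp_mul_pow {a : ℝ} (ha : 0 ≤ a) (x : ℝ) (j : ℕ) :
    exp (-a * j ^ 2) ≤ exp (a * x ^ 2) * exp (-2 * a * x) ^ j := by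
  rw [← exp_nat_mul, ← exp_add, exp_le_exp]
  nlinarith [mul_nonneg ha (sq_nonneg ((j : ℝ) - x))]

theorem sum_exp_neg_mul_sq_Icc_le {a : ℝ} (ha : 0 < a) {k : ℕ} (hk : 0 < k) (n : ℕ) :
    ∑ j ∈ Icc (k + 1) n, exp (-a * j ^ 2) ≤ exp (-a * k ^ 2) / (2 * a * k) := by
  set r := exp (-2 * a * k)
  have hrk : exp (a * k ^ 2) * r ^ k = exp (-a * k ^ 2) := by
    rw [← exp_nat_mul, ← exp_add]; ring_nf
  have hx : 0 < 2 * a * k := by positivity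
  have hr : r < 1 := exp_lt_one_iff.2 (by linarith)
  calc ∑ j ∈ Icc (k + 1) n, exp (-a * j ^ 2)
      ≤ ∑ j ∈ Ico (k + 1) (n + 1), exp (a * k ^ 2) * r ^ j := by
        rw [Ico_add_one_right_eq_Icc]
        exact sum_le_sum fun j _ ↦ exp_neg_mul_sq_le_exp_mul_pow ha.le _ j
    _ ≤ exp (a * k ^ 2) * (r ^ (k + 1) / (1 - r)) := by
        rw [← mul_sum]
        exact mul_le_mul_of_nonneg_left (geom_sum_Ico_le_of_lt_one (exp_pos _).le hr)
          (exp_pos _).le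
    _ = exp (-a * k ^ 2) * (r / (1 - r)) := by
        rw [pow_succ r k, mul_div_assoc, ← mul_assoc, hrk]
    _ ≤ exp (-a * k ^ 2) * (2 * a * k)⁻¹ := by
        gcongr
        simpa only [r, neg_mul] using exp_neg_div_one_sub_exp_neg_le_inv hx
    _ = exp (-a * k ^ 2) / (2 * a * k) := div_eq_mul_inv _ _ |>.symm

lemma exp_neg_mul_one_sub_cos_le {t : ℝ} (ht : 0 ≤ t) {x N : ℝ} (hx₀ : 0 ≤ x) (hxN : x ≤ N) :
    exp (-t * (1 - cos (π * x / N))) ≤ exp (-(2 * t / N ^ 2) * x ^ 2) := by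
  have hθ : |π * x / N| ≤ π := by
    rw [abs_of_nonneg (div_nonneg (by positivity) (hx₀.trans hxN)), mul_div_assoc]
    exact mul_le_of_le_one_right pi_pos.le (div_le_one_of_le₀ hxN (hx₀.trans hxN))
  have hcos := cos_le_one_sub_mul_cos_sq hθ
  rw [exp_le_exp]
  calc -(2 * t / N ^ 2) * x ^ 2 = -t * (2 / π ^ 2 * (π * x / N) ^ 2) := by
        field_simp [pi_ne_zero]
    _ ≥ -t * (1 - cos (π * x / N)) := by nlinarith

theorem eigenvalue_sum_tail_bound_general (N k : ℕ) (hN : 3 < N) (hk1 : 1 ≤ k)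
    (t : ℝ) (ht : 0 < t) :
    ∑ j ∈ Finset.Icc (k + 1) (N - 1),
        Real.exp (-t * (1 - Real.cos (Real.pi * j / N))) ≤
      (1 / 2) * ((N : ℝ) ^ 2 / (k * t)) * Real.exp (-2 * t * k ^ 2 / N ^ 2) := by
  have hN₀ : (0 : ℝ) < N := Nat.cast_pos.2 (by omega)
  have hk₀ : (0 : ℝ) < k := Nat.cast_pos.2 hk1
  calc ∑ j ∈ Icc (k + 1) (N - 1), exp (-t * (1 - cos (π * j / N)))
      ≤ ∑ j ∈ Icc (k + 1) (N - 1), exp (-(2 * t / N ^ 2) * j ^ 2) := by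
        refine sum_le_sum fun j hj ↦ exp_neg_mul_one_sub_cos_le ht.le j.cast_nonneg ?_
        exact_mod_cast (mem_Icc.1 hj).2.trans (N.sub_le 1)
    _ ≤ exp (-(2 * t / N ^ 2) * k ^ 2) / (2 * (2 * t / N ^ 2) * k) :=
        sum_exp_neg_mul_sq_Icc_le (by positivity) hk1 _
    _ ≤ (1 / 2) * ((N : ℝ) ^ 2 / (k * t)) * exp (-2 * t * k ^ 2 / N ^ 2) := by
        rw [show -(2 * t / N ^ 2) * k ^ 2 = -2 * t * k ^ 2 / N ^ 2 by ring,
          div_le_iff₀ (by positivity)]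
        field_simp
        nlinarith [exp_pos (-2 * t * k ^ 2 / N ^ 2)]

theorem eigenvalue_sum_tail_bound (N k : ℕ) (hN : 3 < N) (hk1 : 1 ≤ k)
    (hk2 : k ≤ N - 2) (t : ℝ) (ht : 0 < t) :
    ∑ j ∈ Finset.Icc (k + 1) (N - 1),
        Real.exp (-t * (1 - Real.cos (Real.pi * j / N))) ≤
      (1 / 2) * ((N : ℝ) ^ 2 / (k * t)) * Real.exp (-2 * t * k ^ 2 / N ^ 2) :=
  eigenvalue_sum_tail_bound_general N k hN hk1 t ht
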